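/- Let I be a monomial ideal in R = k[x_1,…,x_n] generated by the monomials with exponent vectors in a finite nonempty set G, let λ_i = max_{γ∈G} γ_i, and let Î = I + ⟨x_1^{λ_1+1},…,x_n^{λ_n+1}⟩ be its artinian closure. For each maximal corner μ of Î define μ̃ by μ̃_i = μ_i if μ_i ≤ λ_i and μ̃_i = 0 otherwise. Then I = ⋂_{μ maximal corner of Î} m^{μ̃}. -/
import Mathlib


open MvPolynomial

/-- The monomial `X^ν = ∏ i, x_i ^ ν i` in `k[x_1, …, x_n]`. -/
noncomputable def Xpow (k : Type) [Field k] (n : ℕ) (ν : Fin n → ℕ) :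
    MvPolynomial (Fin n) k :=
  ∏ i, X i ^ ν i

lemma Xpow_eq_monomial (k : Type) [Field k] (n : ℕ) (ν : Fin n → ℕ) :
    Xpow k n ν = monomial (Finsupp.equivFunOnFinite.symm ν) (1 : k) := by
  rw [Xpow, monomial_eq, C_1, one_mul, Finsupp.prod_fintype]
  · simp
  · intro i; exact pow_zero _

lemma mem_span_Xpow {k : Type} [Field k] {n : ℕ} {S : Set (Fin n → ℕ)}
    {f : MvPolynomial (Fin n) k} :
    f ∈ Ideal.span (Xpow k n '' S) ↔
      ∀ d ∈ f.support, ∃ γ ∈ S, ∀ i, γ i ≤ (d : Fin n → ℕ) i := by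
  have h : Xpow k n '' S
      = (fun s => monomial s (1 : k)) '' (Finsupp.equivFunOnFinite.symm '' S) := by
    rw [Set.image_image]
    exact Set.image_congr' (fun ν => Xpow_eq_monomial k n ν)
  rw [h, mem_ideal_span_monomial_image]
  refine forall₂_congr fun d _ => ?_
  constructor
  · rintro ⟨si, ⟨γ, hγ, rfl⟩, hle⟩
    exact ⟨γ, hγ, fun i => by simpa using hle i⟩
  · rintro ⟨γ, hγ, hle⟩
    exact ⟨_, ⟨γ, hγ, rfl⟩, fun i => by simpa using hle i⟩

lemma support_Xpow (k : Type) [Field k] (n : ℕ) (ν : Fin n → ℕ) :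
    (Xpow k n ν).support = {Finsupp.equivFunOnFinite.symm ν} := by
  classical
  rw [Xpow_eq_monomial, support_monomial, if_neg one_ne_zero]

lemma Xpow_mem_span {k : Type} [Field k] {n : ℕ} {S : Set (Fin n → ℕ)} {ν : Fin n → ℕ} :
    Xpow k n ν ∈ Ideal.span (Xpow k n '' S) ↔ ∃ γ ∈ S, ∀ i, γ i ≤ ν i := by
  rw [mem_span_Xpow, support_Xpow]
  simp

lemma Xpow_add (k : Type) [Field k] (n : ℕ) (a b : Fin n → ℕ) :
    Xpow k n (a + b) = Xpow k n a * Xpow k n b := by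
  rw [Xpow, Xpow, Xpow, ← Finset.prod_mul_distrib]
  exact Finset.prod_congr rfl fun i _ => pow_add _ _ _

lemma Xpow_single (k : Type) [Field k] (n : ℕ) (i : Fin n) (m : ℕ) :
    Xpow k n (Pi.single i m) = X i ^ m := by
  rw [Xpow]
  rw [Finset.prod_eq_single i]
  · simp
  · intro j _ hj; simp [Pi.single_eq_of_ne hj]
  · simp

/-- The lowered multidegree: subtract one from every entry (truncated at 0). -/
def low {n : ℕ} (μ : Fin n → ℕ) : Fin n → ℕ := fun i => μ i - 1

/-- The irreducible monomial ideal `m^μ = ⟨x_i^{μ_i} : μ_i ≠ 0⟩`. -/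
noncomputable def mIdeal (k : Type) [Field k] (n : ℕ) (μ : Fin n → ℕ) :
    Ideal (MvPolynomial (Fin n) k) :=
  Ideal.span ((fun i => (X i : MvPolynomial (Fin n) k) ^ μ i) '' {i | μ i ≠ 0})

/-- A monomial ideal: an ideal generated by a set of monomials. -/
def IsMonomialIdeal {k : Type} [Field k] {n : ℕ}
    (I : Ideal (MvPolynomial (Fin n) k)) : Prop :=
  ∃ S : Set (Fin n → ℕ), I = Ideal.span (Xpow k n '' S)

/-- `μ` is a maximal corner of `I`: `μ` has full support, `x_i · X^{low μ} ∈ I`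
for every `i`, and `X^{low μ} ∉ I`. -/
def IsMaximalCorner {k : Type} [Field k] {n : ℕ}
    (I : Ideal (MvPolynomial (Fin n) k)) (μ : Fin n → ℕ) : Prop :=
  (∀ i, μ i ≠ 0) ∧
    (∀ i, (X i : MvPolynomial (Fin n) k) * Xpow k n (low μ) ∈ I) ∧
    Xpow k n (low μ) ∉ I

lemma X_mul_Xpow (k : Type) [Field k] (n : ℕ) (i : Fin n) (ν : Fin n → ℕ) :
    (X i : MvPolynomial (Fin n) k) * Xpow k n ν = Xpow k n (ν + Pi.single i 1) := by
  rw [Xpow_add, Xpow_single, pow_one, mul_comm]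

lemma mIdeal_mem {k : Type} [Field k] {n : ℕ} (σ : Fin n → ℕ)
    (f : MvPolynomial (Fin n) k) :
    f ∈ Ideal.span ((fun i => (X i : MvPolynomial (Fin n) k) ^ σ i) '' {i | σ i ≠ 0}) ↔
      ∀ d ∈ f.support, ∃ i, σ i ≠ 0 ∧ σ i ≤ (d : Fin n → ℕ) i := by
  have h : ((fun i => (X i : MvPolynomial (Fin n) k) ^ σ i) '' {i | σ i ≠ 0})
      = Xpow k n '' ((fun i => Pi.single i (σ i)) '' {i | σ i ≠ 0}) := by
    rw [Set.image_image]
    exact Set.image_congr' fun i => (Xpow_single k n i (σ i)).symm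
  rw [h, mem_span_Xpow]
  refine forall₂_congr fun d _ => ?_
  constructor
  · rintro ⟨γ, ⟨i, hi, rfl⟩, hle⟩
    exact ⟨i, hi, by simpa using hle i⟩
  · rintro ⟨i, hi, hle⟩
    refine ⟨_, ⟨i, hi, rfl⟩, fun j => ?_⟩
    rcases eq_or_ne j i with rfl | hj
    · simpa using hle
    · simp [Pi.single_eq_of_ne hj]

/-- Irredundant irreducible decomposition of a general monomial
ideal from the maximal corners of its artinian closure `Î`: the components are
`m^{μ̃}` where `μ̃ i = μ i` if `μ i ≤ λ i` and `0` otherwise. -/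
theorem stmt4 (k : Type) [Field k] (n : ℕ) (G : Finset (Fin n → ℕ))
    (hG : G.Nonempty) (I : Ideal (MvPolynomial (Fin n) k))
    (hI : I = Ideal.span (Xpow k n '' (G : Set (Fin n → ℕ))))
    (lam : Fin n → ℕ) (hlam : ∀ i, lam i = G.sup fun γ => γ i)
    (Ihat : Ideal (MvPolynomial (Fin n) k))
    (hIhat : Ihat = I ⊔ Ideal.span
      (Set.range fun i : Fin n => (X i : MvPolynomial (Fin n) k) ^ (lam i + 1))) :
    I = ⨅ μ ∈ {μ : Fin n → ℕ | IsMaximalCorner Ihat μ},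
          mIdeal k n (fun i => if μ i ≤ lam i then μ i else 0) := by
  classical
  -- `Ihat` as a span of monomials
  have hIhatSpan : Ihat = Ideal.span (Xpow k n ''
      ((G : Set (Fin n → ℕ)) ∪ Set.range (fun i => Pi.single i (lam i + 1)))) := by
    rw [hIhat, hI, Set.image_union, Ideal.span_union]
    congr 2
    rw [← Set.range_comp]
    refine congrArg _ (funext fun i => ?_)
    simp only [Function.comp_apply]
    rw [Xpow_single]
  -- membership of a monomial in `Ihat`
  have memIhat : ∀ d : Fin n → ℕ, Xpow k n d ∈ Ihat ↔
      ((∃ γ ∈ G, ∀ i, γ i ≤ d i) ∨ ∃ i, lam i + 1 ≤ d i) := by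
    intro d
    rw [hIhatSpan, Xpow_mem_span]
    constructor
    · rintro ⟨γ, hγ | ⟨i, rfl⟩, hle⟩
      · exact Or.inl ⟨γ, hγ, hle⟩
      · exact Or.inr ⟨i, by simpa using hle i⟩
    · rintro (⟨γ, hγ, hle⟩ | ⟨i, hi⟩)
      · exact ⟨γ, Or.inl hγ, hle⟩
      · refine ⟨Pi.single i (lam i + 1), Or.inr ⟨i, rfl⟩, fun j => ?_⟩
        rcases eq_or_ne j i with rfl | hj
        · simpa using hi
        · simp [Pi.single_eq_of_ne hj]
  -- maximal corners in combinatorial terms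
  have mcIff : ∀ μ : Fin n → ℕ, IsMaximalCorner Ihat μ ↔
      ((∀ i, μ i ≠ 0) ∧
        (∀ i, ((∃ γ ∈ G, ∀ j, γ j ≤ ((low μ + Pi.single i 1 : Fin n → ℕ)) j) ∨
          ∃ j, lam j + 1 ≤ ((low μ + Pi.single i 1 : Fin n → ℕ)) j)) ∧
        ¬ ((∃ γ ∈ G, ∀ j, γ j ≤ low μ j) ∨ ∃ j, lam j + 1 ≤ low μ j)) := by
    intro μ
    unfold IsMaximalCorner
    rw [memIhat (low μ)]
    refine and_congr Iff.rfl (and_congr (forall_congr' fun i => ?_) Iff.rfl)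
    rw [X_mul_Xpow, memIhat]
  -- the key combinatorial equivalence, one exponent at a time
  have key : ∀ d : Fin n → ℕ, (∃ γ ∈ G, ∀ i, γ i ≤ d i) ↔
      (∀ μ : Fin n → ℕ, IsMaximalCorner Ihat μ →
        ∃ i, (if μ i ≤ lam i then μ i else 0) ≠ 0 ∧
          (if μ i ≤ lam i then μ i else 0) ≤ d i) := by
    intro d
    constructor
    · rintro ⟨γ, hγ, hγd⟩ μ hμ
      rw [mcIff] at hμ
      obtain ⟨hfull, -, hnot⟩ := hμ
      have hγlam : ∀ i, γ i ≤ lam i := fun i => (hlam i) ▸ Finset.le_sup (f := fun γ : Fin n → ℕ => γ i) hγ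
      have hng : ¬ ∀ i, γ i ≤ low μ i := fun h => hnot (Or.inl ⟨γ, hγ, h⟩)
      push_neg at hng
      obtain ⟨i, hi⟩ := hng
      have h1 : μ i ≠ 0 := hfull i
      have hμγ : μ i ≤ γ i := by
        have : low μ i = μ i - 1 := rfl
        omega
      have hμlam : μ i ≤ lam i := le_trans hμγ (hγlam i)
      refine ⟨i, ?_, ?_⟩ <;> rw [if_pos hμlam]
      · exact h1
      · exact le_trans hμγ (hγd i)
    · intro h
      by_contra hcon
      set ν' : Fin n → ℕ := fun i => min (d i) (lam i) with hν'
      set T : Finset (Fin n → ℕ) :=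
        (Fintype.piFinset fun i => Finset.range (lam i + 1)).filter
          (fun δ => (∀ i, ν' i ≤ δ i) ∧
            ¬ ((∃ γ ∈ G, ∀ i, γ i ≤ δ i) ∨ ∃ i, lam i + 1 ≤ δ i)) with hT
    -- ν' belongs to T
      have hmemT : ∀ δ : Fin n → ℕ, δ ∈ T ↔
          ((∀ i, δ i ≤ lam i) ∧ (∀ i, ν' i ≤ δ i) ∧
            ¬ ((∃ γ ∈ G, ∀ i, γ i ≤ δ i) ∨ ∃ i, lam i + 1 ≤ δ i)) := by
        intro δ
        rw [hT, Finset.mem_filter, Fintype.mem_piFinset]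
        simp only [Finset.mem_range, Nat.lt_succ_iff]
      have hν'T : ν' ∈ T := by
        rw [hmemT]
        refine ⟨fun i => min_le_right _ _, fun i => le_refl _, ?_⟩
        rintro (⟨γ, hγ, hle⟩ | ⟨i, hi⟩)
        · exact hcon ⟨γ, hγ, fun i => le_trans (hle i) (min_le_left _ _)⟩
        · have h2 : ν' i = min (d i) (lam i) := rfl
          omega
      obtain ⟨δ, hδT, hδmax⟩ := Finset.exists_max_image T (fun δ => ∑ i, δ i) ⟨ν', hν'T⟩
      rw [hmemT] at hδT
      obtain ⟨hδlam, hδge, hδnot⟩ := hδT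
      set μ : Fin n → ℕ := fun i => δ i + 1 with hμdef
      have hlow : low μ = δ := funext fun i => by simp [low, hμdef]
      have hmc : IsMaximalCorner Ihat μ := by
        rw [mcIff, hlow]
        refine ⟨fun i => by simp [hμdef], fun i => ?_, hδnot⟩
        by_contra hnm
        have hbd : ∀ j, ((δ + Pi.single i 1 : Fin n → ℕ)) j ≤ lam j := by
          intro j
          by_contra hj
          exact hnm (Or.inr ⟨j, by omega⟩)
        have hTm : ((δ + Pi.single i 1 : Fin n → ℕ)) ∈ T := by
          rw [hmemT]
          exact ⟨hbd, fun j => le_trans (hδge j) (by simp [Pi.add_apply]), hnm⟩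
        have hsum := hδmax _ hTm
        have : ∑ j, ((δ + Pi.single i 1 : Fin n → ℕ)) j = (∑ j, δ j) + 1 := by
          simp [Finset.sum_add_distrib]
        omega
      obtain ⟨i, hne, hle⟩ := h μ hmc
      by_cases hc : μ i ≤ lam i
      · rw [if_pos hc] at hne hle
        have h1 : min (d i) (lam i) ≤ δ i := by
          have := hδge i
          simpa [hν'] using this
        have h2 : μ i = δ i + 1 := rfl
        omega
      · rw [if_neg hc] at hne
        exact hne rfl
  -- assemble
  ext f
  rw [hI, mem_span_Xpow]
  simp only [Ideal.mem_iInf, Set.mem_setOf_eq, mIdeal, mIdeal_mem]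
  constructor
  · intro h μ hμ d hd
    exact ((key d).mp (h d hd)) μ hμ
  · intro h d hd
    exact (key d).mpr (fun μ hμ => h μ hμ d hd)
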